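/- arXiv:1202.6285 — 3 statements merged into one kernel-verified Lean document; each statement's English description precedes it below -/
import Mathlib

section
/- Let q_s, q_t > 0 and let A be the real algebra with basis {T_w : w ∈ W} indexed by the infinite dihedral group W = ⟨s,t | s²=t²=1⟩, with multiplication determined by T_s T_w = T_{sw} if ℓ(sw) > ℓ(w) and T_s T_w = (q_s−1)T_w + q_s T_{sw} if ℓ(sw) < ℓ(w) (and similarly for t). Then the map φ determined by φ(s) = (1−q_s)/(1+q_s) + (2/(1+q_s))T_s and φ(t) = (1−q_t)/(1+q_t) + (2/(1+q_t))T_t extends to an algebra isomorphism from the group algebra ℝW to A. -/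
/-! `DihedralGroup 0` is the infinite dihedral group W = ⟨s,t | s²=t²=1⟩ with
generators s = sr 0 and t = sr 1. -/

def zmodToInt (n : ZMod 0) : ℤ := n

/-- Word length with respect to the Coxeter generators s = sr 0, t = sr 1 of
the infinite dihedral group. -/
def dihLen : DihedralGroup 0 → ℕ
  | .r n => 2 * (zmodToInt n).natAbs
  | .sr k => if zmodToInt k ≤ 0 then 2 * (zmodToInt k).natAbs + 1
             else 2 * (zmodToInt k).natAbs - 1


/-! Since `T_s² = (q_s - 1) T_s + q_s`, the element `σ_s = φ(s)` squares to `1`, and likewise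
`σ_t`; as `W` is the free product of two groups of order two, `φ` is an algebra map `ℝW → A`.
Conversely, `τ_s = ((1 + q_s) s + q_s - 1) / 2 ∈ ℝW` satisfies the Hecke quadratic relation, and
`φ(τ_s) = T_s`. Both `w ↦ T_w` and `w ↦ φ(τ_w)`, where `τ_w` is the product of `τ_s, τ_t` along
the reduced word of `w`, are characterised by `T_1 = 1` and `T_g T_w = T_{gw}` whenever
`ℓ(gw) > ℓ(w)`, so `φ(τ_w) = T_w`. The quadratic relations make the span of the `τ_w` stable
under left multiplication by `τ_s, τ_t`, hence by the subalgebra they generate, which contains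
`s` and `t`; so the `τ_w` span `ℝW`. A linear map sending a spanning family onto a basis is
bijective. -/

open DihedralGroup

local notation "W" => DihedralGroup 0

section Length

variable (m n : ZMod 0)

theorem zmodToInt_zero : zmodToInt 0 = 0 := rfl
theorem zmodToInt_one : zmodToInt 1 = 1 := rfl
theorem zmodToInt_add : zmodToInt (m + n) = zmodToInt m + zmodToInt n := rfl
theorem zmodToInt_sub : zmodToInt (m - n) = zmodToInt m - zmodToInt n := rfl

theorem dihLen_r : dihLen (r n) = 2 * (zmodToInt n).natAbs := rfl

theorem dihLen_sr : dihLen (sr n) = (2 * zmodToInt n - 1).natAbs := by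
  rw [dihLen]
  split <;> omega

-- `dihLen` is even on rotations and odd on reflections.
theorem dihLen_sr_mul_ne (i : ZMod 0) (w : W) : dihLen (sr i * w) ≠ dihLen w := by
  cases w <;>
  · simp only [sr_mul_r, sr_mul_sr, dihLen_r, dihLen_sr, zmodToInt_add, zmodToInt_sub]
    omega

theorem exists_dihLen_sr_mul_lt {w : W} (hw : w ≠ 1) :
    dihLen (sr 0 * w) < dihLen w ∨ dihLen (sr 1 * w) < dihLen w := by
  cases w with
  | r n =>
    have : zmodToInt n ≠ 0 := fun h => hw (congrArg r h)
    simp only [sr_mul_r, dihLen_r, dihLen_sr, zmodToInt_add, zmodToInt_zero, zmodToInt_one]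
    omega
  | sr n =>
    simp only [sr_mul_sr, dihLen_r, dihLen_sr, zmodToInt_sub, zmodToInt_zero, zmodToInt_one]
    omega

end Length

section Lift

variable {G : Type*} [Group G] {a b : G}

theorem mul_mul_zpow_of_mul_self_eq_one (ha : a * a = 1) (hb : b * b = 1) (n : ℤ) :
    a * (a * b) ^ n = (a * b) ^ (-n) * a := by
  have h : SemiconjBy a (a * b) (a * b)⁻¹ := by
    rw [SemiconjBy, mul_inv_rev, inv_mul_cancel_right, ← mul_assoc, ha, one_mul,
      inv_eq_of_mul_eq_one_left hb]
  rw [(h.zpow_right n).eq, inv_zpow']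

def DihedralGroup.liftInvolutions (a b : G) (ha : a * a = 1) (hb : b * b = 1) : W →* G :=
  MonoidHom.mk' (fun | r n => (a * b) ^ zmodToInt n | sr n => a * (a * b) ^ zmodToInt n) <| by
    have key := mul_mul_zpow_of_mul_self_eq_one ha hb
    rintro (i | i) (j | j)
    · exact zpow_add _ _ _
    · change a * (a * b) ^ (zmodToInt j - zmodToInt i) =
        (a * b) ^ zmodToInt i * (a * (a * b) ^ zmodToInt j)
      rw [key, key, ← mul_assoc, ← zpow_add, neg_sub, sub_eq_add_neg]
    · exact (congrArg _ (zpow_add _ _ _)).trans (mul_assoc _ _ _).symm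
    · change (a * b) ^ (zmodToInt j - zmodToInt i) =
        a * (a * b) ^ zmodToInt i * (a * (a * b) ^ zmodToInt j)
      rw [key, mul_assoc, ← mul_assoc a a, ha, one_mul, ← zpow_add, neg_add_eq_sub]

theorem DihedralGroup.liftInvolutions_sr_zero (ha : a * a = 1) (hb : b * b = 1) :
    liftInvolutions a b ha hb (sr 0) = a := by
  change a * (a * b) ^ (0 : ℤ) = a
  rw [zpow_zero, mul_one]

theorem DihedralGroup.liftInvolutions_sr_one (ha : a * a = 1) (hb : b * b = 1) :
    liftInvolutions a b ha hb (sr 1) = b := by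
  change a * (a * b) ^ (1 : ℤ) = b
  rw [zpow_one, ← mul_assoc, ha, one_mul]

end Lift

section Words

variable {M N : Type*} [Monoid M] [Monoid N]

def ReducedMulLeft (g : W) (z : M) (F : W → M) : Prop :=
  ∀ w, dihLen w < dihLen (g * w) → z * F w = F (g * w)

theorem ReducedMulLeft.map {g : W} {z : M} {F : W → M} (hF : ReducedMulLeft g z F)
    {H : Type*} [FunLike H M N] [MonoidHomClass H M N] (f : H) :
    ReducedMulLeft g (f z) (f ∘ F) :=
  fun w hw => by rw [Function.comp_apply, Function.comp_apply, ← map_mul, hF w hw]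

theorem ReducedMulLeft.eq_mul_of_lt {i : ZMod 0} {z : M} {F : W → M}
    (hF : ReducedMulLeft (sr i) z F) {w : W} (hw : dihLen (sr i * w) < dihLen w) :
    F w = z * F (sr i * w) := by
  have h := hF (sr i * w) (by rwa [← mul_assoc, sr_mul_self, one_mul])
  rwa [← mul_assoc, sr_mul_self, one_mul, eq_comm] at h

/-- The reduced word of `w` in the letters `x, y` standing for `s = sr 0, t = sr 1`:
`r n = (st)^n`, and `sr n = s(ts)^(-n)` for `n ≤ 0`, `sr n = t(st)^(n-1)` for `n > 0`. -/
def altWord (x y : M) : W → M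
  | r n => if 0 ≤ zmodToInt n then (x * y) ^ (zmodToInt n).natAbs
    else (y * x) ^ (zmodToInt n).natAbs
  | sr n => if zmodToInt n ≤ 0 then x * (y * x) ^ (zmodToInt n).natAbs
    else y * (x * y) ^ ((zmodToInt n).natAbs - 1)

section Unfold

variable (x y : M) {n : ZMod 0}

theorem altWord_one : altWord x y 1 = 1 := pow_zero _

theorem altWord_r_of_nonneg (h : 0 ≤ zmodToInt n) :
    altWord x y (r n) = (x * y) ^ (zmodToInt n).natAbs :=
  if_pos h

theorem altWord_r_of_nonpos (h : zmodToInt n ≤ 0) :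
    altWord x y (r n) = (y * x) ^ (zmodToInt n).natAbs := by
  rcases h.lt_or_eq with h | h
  · exact if_neg h.not_ge
  · rw [altWord_r_of_nonneg x y h.ge, h, Int.natAbs_zero, pow_zero, pow_zero]

theorem altWord_sr_of_nonpos (h : zmodToInt n ≤ 0) :
    altWord x y (sr n) = x * (y * x) ^ (zmodToInt n).natAbs :=
  if_pos h

theorem altWord_sr_of_pos (h : 0 < zmodToInt n) :
    altWord x y (sr n) = y * (x * y) ^ ((zmodToInt n).natAbs - 1) :=
  if_neg h.not_ge

theorem reducedMulLeft_sr_zero_altWord : ReducedMulLeft (sr 0) x (altWord x y) := by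
  rintro (n | n) h <;>
    simp only [sr_mul_r, sr_mul_sr, zero_add, sub_zero, dihLen_r, dihLen_sr] at h ⊢
  · rw [altWord_r_of_nonpos x y (by omega), altWord_sr_of_nonpos x y (by omega)]
  · obtain ⟨k, hk⟩ : ∃ k, (zmodToInt n).natAbs = k + 1 := Nat.exists_eq_add_one.2 (by omega)
    rw [altWord_sr_of_pos x y (by omega), altWord_r_of_nonneg x y (by omega), hk,
      Nat.add_sub_cancel, pow_succ', mul_assoc]

theorem reducedMulLeft_sr_one_altWord : ReducedMulLeft (sr 1) y (altWord x y) := by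
  rintro (n | n) h <;>
    simp only [sr_mul_r, sr_mul_sr, dihLen_r, dihLen_sr, zmodToInt_add, zmodToInt_sub,
      zmodToInt_one] at h ⊢
  · have hpos : 0 < zmodToInt (1 + n) := by rw [zmodToInt_add, zmodToInt_one]; omega
    rw [altWord_r_of_nonneg x y (by omega), altWord_sr_of_pos x y hpos, zmodToInt_add,
      zmodToInt_one, show (1 + zmodToInt n).natAbs - 1 = (zmodToInt n).natAbs by omega]
  · have hneg : zmodToInt (n - 1) ≤ 0 := by rw [zmodToInt_sub, zmodToInt_one]; omega
    rw [altWord_sr_of_nonpos x y (by omega), altWord_r_of_nonpos x y hneg, zmodToInt_sub,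
      zmodToInt_one, show (zmodToInt n - 1).natAbs = (zmodToInt n).natAbs + 1 by omega,
      pow_succ', mul_assoc]

end Unfold

theorem eq_altWord {F : W → M} {x y : M} (h1 : F 1 = 1) (hs : ReducedMulLeft (sr 0) x F)
    (ht : ReducedMulLeft (sr 1) y F) : F = altWord x y := by
  funext w
  induction h : dihLen w using Nat.strong_induction_on generalizing w with
  | _ n ih =>
    by_cases hw : w = 1
    · rw [hw, h1, altWord_one]
    rcases exists_dihLen_sr_mul_lt hw with hlt | hlt
    · rw [hs.eq_mul_of_lt hlt, (reducedMulLeft_sr_zero_altWord x y).eq_mul_of_lt hlt,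
        ih _ (h ▸ hlt) _ rfl]
    · rw [ht.eq_mul_of_lt hlt, (reducedMulLeft_sr_one_altWord x y).eq_mul_of_lt hlt,
        ih _ (h ▸ hlt) _ rfl]

theorem map_altWord (x y : M) {H : Type*} [FunLike H M N] [MonoidHomClass H M N] (f : H)
    (w : W) :
    f (altWord x y w) = altWord (f x) (f y) w :=
  congrFun (eq_altWord (F := f ∘ altWord x y) (by simp [altWord_one])
    ((reducedMulLeft_sr_zero_altWord x y).map f) ((reducedMulLeft_sr_one_altWord x y).map f)) w

theorem altWord_mem {S : Type*} [SetLike S M] [SubmonoidClass S M] {P : S} {x y : M}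
    (hx : x ∈ P) (hy : y ∈ P) (w : W) : altWord x y w ∈ P := by
  cases w <;> simp only [altWord] <;> split <;> apply_rules [mul_mem, pow_mem]

end Words

open Submodule Set

section Span

variable {k R : Type*} [CommRing k] [Ring R] [Algebra k R]

theorem ReducedMulLeft.mul_mem_span {i : ZMod 0} {z : R} {F : W → R}
    (hF : ReducedMulLeft (sr i) z F) {a b : k} (hz : z * z = a • z + b • 1) {v : R}
    (hv : v ∈ span k (range F)) : z * v ∈ span k (range F) := by
  have hzF : ∀ w, z * F w ∈ span k (range F) := fun w => by
    rcases (dihLen_sr_mul_ne i w).lt_or_gt with h | h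
    · rw [hF.eq_mul_of_lt h, ← mul_assoc, hz, add_mul, smul_mul_assoc, smul_mul_assoc, one_mul,
        ← hF.eq_mul_of_lt h]
      exact add_mem (smul_mem _ _ (subset_span ⟨w, rfl⟩)) (smul_mem _ _ (subset_span ⟨_, rfl⟩))
    · exact hF w h ▸ subset_span ⟨_, rfl⟩
  exact (span_le (p := (span k (range F)).comap (LinearMap.mulLeft k z))).2
    (range_subset_iff.2 hzF) hv

theorem adjoin_le_span_range_altWord {x y : R} {a b c d : k} (hx : x * x = a • x + b • 1)
    (hy : y * y = c • y + d • 1) :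
    Subalgebra.toSubmodule (Algebra.adjoin k {x, y}) ≤ span k (range (altWord x y)) := by
  intro u hu
  have hmul : ∀ v ∈ span k (range (altWord x y)), u * v ∈ span k (range (altWord x y)) := by
    induction hu using Algebra.adjoin_induction with
    | mem u hu =>
      rcases hu with rfl | rfl
      exacts [fun v => (reducedMulLeft_sr_zero_altWord u y).mul_mem_span hx,
        fun v => (reducedMulLeft_sr_one_altWord x u).mul_mem_span hy]
    | algebraMap r => exact fun v hv => (Algebra.smul_def r v).symm ▸ smul_mem _ r hv
    | add u u' _ _ hu hu' =>
      exact fun v hv => (add_mul u u' v).symm ▸ add_mem (hu v hv) (hu' v hv)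
    | mul u u' _ _ hu hu' => exact fun v hv => (mul_assoc u u' v).symm ▸ hu _ (hu' v hv)
  simpa using hmul 1 (subset_span ⟨1, altWord_one x y⟩)

end Span

section HeckeGenerators

variable {A B : Type*} [Ring A] [Algebra ℝ A] [Ring B] [Algebra ℝ B] {q : ℝ} {x : A}

noncomputable def heckeInvol (q : ℝ) (x : A) : A :=
  algebraMap ℝ A ((1 - q) / (1 + q)) + (2 / (1 + q)) • x

noncomputable def heckeGen (q : ℝ) (x : A) : A :=
  algebraMap ℝ A ((q - 1) / 2) + ((1 + q) / 2) • x

theorem heckeInvol_mul_self (hq : 1 + q ≠ 0) (hx : x * x = (q - 1) • x + q • 1) :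
    heckeInvol q x * heckeInvol q x = 1 := by
  simp only [heckeInvol, Algebra.algebraMap_eq_smul_one, add_mul, mul_add, smul_mul_smul_comm,
    one_mul, mul_one, hx]
  match_scalars <;> (field_simp; ring)

theorem heckeGen_mul_self (hx : x * x = 1) :
    heckeGen q x * heckeGen q x = (q - 1) • heckeGen q x + q • 1 := by
  simp only [heckeGen, Algebra.algebraMap_eq_smul_one, add_mul, mul_add, smul_mul_smul_comm,
    one_mul, mul_one, hx]
  match_scalars <;> ring

theorem heckeGen_heckeInvol (hq : 1 + q ≠ 0) : heckeGen q (heckeInvol q x) = x := by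
  simp only [heckeGen, heckeInvol, Algebra.algebraMap_eq_smul_one]
  match_scalars
  · field_simp
    ring
  · field_simp

theorem heckeInvol_heckeGen (hq : 1 + q ≠ 0) : heckeInvol q (heckeGen q x) = x := by
  simp only [heckeGen, heckeInvol, Algebra.algebraMap_eq_smul_one]
  match_scalars
  · field_simp
    ring
  · field_simp

theorem mem_of_heckeGen_mem (hq : 1 + q ≠ 0) {S : Subalgebra ℝ A} (hx : heckeGen q x ∈ S) :
    x ∈ S :=
  heckeInvol_heckeGen (x := x) hq ▸ add_mem (S.algebraMap_mem _) (S.smul_mem hx _)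

theorem map_heckeGen (f : A →ₐ[ℝ] B) : f (heckeGen q x) = heckeGen q (f x) := by
  simp only [heckeGen, map_add, map_smul, AlgHom.commutes]

end HeckeGenerators

section GroupAlgebra

open MonoidAlgebra

variable {k A : Type*} [CommSemiring k] [Semiring A] [Algebra k A]

noncomputable def MonoidAlgebra.liftInvolutions (x y : A) (hx : x * x = 1) (hy : y * y = 1) :
    MonoidAlgebra k W →ₐ[k] A :=
  lift k A W <| (Units.coeHom A).comp <|
    DihedralGroup.liftInvolutions ⟨x, x, hx, hx⟩ ⟨y, y, hy, hy⟩ (Units.ext hx) (Units.ext hy)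

theorem MonoidAlgebra.liftInvolutions_of_sr_zero {x y : A} (hx : x * x = 1) (hy : y * y = 1) :
    liftInvolutions (k := k) x y hx hy (of k W (sr 0)) = x := by
  rw [liftInvolutions, lift_of, MonoidHom.comp_apply, DihedralGroup.liftInvolutions_sr_zero]
  rfl

theorem MonoidAlgebra.liftInvolutions_of_sr_one {x y : A} (hx : x * x = 1) (hy : y * y = 1) :
    liftInvolutions (k := k) x y hx hy (of k W (sr 1)) = y := by
  rw [liftInvolutions, lift_of, MonoidHom.comp_apply, DihedralGroup.liftInvolutions_sr_one]
  rfl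

theorem altWord_of : altWord (of k W (sr 0)) (of k W (sr 1)) = of k W :=
  (eq_altWord (map_one _) (fun _ _ => (map_mul _ _ _).symm)
    (fun _ _ => (map_mul _ _ _).symm)).symm

theorem span_range_altWord_heckeGen_eq_top {qs qt : ℝ} (hqs : 1 + qs ≠ 0) (hqt : 1 + qt ≠ 0) :
    span ℝ (range (altWord (heckeGen qs (of ℝ W (sr 0))) (heckeGen qt (of ℝ W (sr 1))))) =
      ⊤ := by
  set τ := altWord (heckeGen qs (of ℝ W (sr 0))) (heckeGen qt (of ℝ W (sr 1)))
  have hsq (i : ZMod 0) (q : ℝ) := heckeGen_mul_self (q := q)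
    (show of ℝ W (sr i) * of ℝ W (sr i) = 1 by rw [← map_mul, sr_mul_self, map_one])
  have hgen : Algebra.adjoin ℝ {of ℝ W (sr 0), of ℝ W (sr 1)} ≤
      Algebra.adjoin ℝ {heckeGen qs (of ℝ W (sr 0)), heckeGen qt (of ℝ W (sr 1))} := by
    rw [Algebra.adjoin_le_iff, insert_subset_iff, singleton_subset_iff]
    exact ⟨mem_of_heckeGen_mem hqs (Algebra.subset_adjoin (by simp)),
      mem_of_heckeGen_mem hqt (Algebra.subset_adjoin (by simp))⟩
  have hof (w : W) : of ℝ W w ∈ span ℝ (range τ) :=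
    adjoin_le_span_range_altWord (hsq 0 qs) (hsq 1 qt) <| hgen <|
      congrFun (altWord_of (k := ℝ)) w ▸
        altWord_mem (Algebra.subset_adjoin (by simp)) (Algebra.subset_adjoin (by simp)) w
  exact eq_top_iff.2 fun f _ =>
    span_le.2 (image_subset_iff.2 fun w _ => hof w) (mem_span_support_coeff f)

end GroupAlgebra

section HeckeRelations

variable {A : Type*} [Ring A] [Algebra ℝ A] {T : W → A} {g : W} {q : ℝ}

def IsHeckeMulLeft (T : W → A) (g : W) (q : ℝ) : Prop :=
  ∀ w, T g * T w =
    if dihLen (g * w) > dihLen w then T (g * w) else (q - 1) • T w + q • T (g * w)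

theorem IsHeckeMulLeft.reducedMulLeft (h : IsHeckeMulLeft T g q) : ReducedMulLeft g (T g) T :=
  fun w hw => by rw [h, if_pos hw]

theorem IsHeckeMulLeft.mul_self {i : ZMod 0} (hone : T 1 = 1) (h : IsHeckeMulLeft T (sr i) q) :
    T (sr i) * T (sr i) = (q - 1) • T (sr i) + q • 1 := by
  rw [h, sr_mul_self, hone, if_neg (show ¬dihLen 1 > dihLen (sr i) from Nat.not_lt_zero _)]

end HeckeRelations

theorem LinearMap.bijective_of_map_eq_basis {k M N ι : Type*} [CommSemiring k] [AddCommMonoid M]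
    [Module k M] [AddCommMonoid N] [Module k N] (f : M →ₗ[k] N) (b : Module.Basis ι k N)
    {v : ι → M} (hv : span k (Set.range v) = ⊤) (hf : ∀ i, f (v i) = b i) :
    Function.Bijective f := by
  set g := b.constr k v
  have hfg : Function.LeftInverse f g :=
    LinearMap.congr_fun (b.ext fun i => by simp [g, hf] : f ∘ₗ g = LinearMap.id)
  have hg : Function.Surjective g := LinearMap.range_eq_top.1 (by rw [b.constr_range, hv])
  exact ⟨(hfg.rightInverse_of_surjective hg).injective, hfg.surjective⟩

open MonoidAlgebra

/-- Let A be a real algebra with basis {T_w : w ∈ W} (W the infinite dihedral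
group), unit T_1 = 1, and Hecke multiplication rules
T_s T_w = T_{sw} if ℓ(sw) > ℓ(w) and T_s T_w = (q_s−1)T_w + q_s T_{sw}
otherwise (similarly for t), where q_s, q_t > 0.  Then
φ(s) = (1−q_s)/(1+q_s) + (2/(1+q_s))T_s, φ(t) = (1−q_t)/(1+q_t) + (2/(1+q_t))T_t
extends to an algebra isomorphism ℝW ≃ A. -/
theorem hecke_iso_group_algebra (qs qt : ℝ) (hqs : 0 < qs) (hqt : 0 < qt)
    {A : Type*} [Ring A] [Algebra ℝ A]
    (T : Module.Basis (DihedralGroup 0) ℝ A)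
    (hone : T 1 = 1)
    (hmuls : ∀ w : DihedralGroup 0,
      T (DihedralGroup.sr 0) * T w =
        if dihLen (DihedralGroup.sr 0 * w) > dihLen w then T (DihedralGroup.sr 0 * w)
        else (qs - 1) • T w + qs • T (DihedralGroup.sr 0 * w))
    (hmult : ∀ w : DihedralGroup 0,
      T (DihedralGroup.sr 1) * T w =
        if dihLen (DihedralGroup.sr 1 * w) > dihLen w then T (DihedralGroup.sr 1 * w)
        else (qt - 1) • T w + qt • T (DihedralGroup.sr 1 * w)) :
    ∃ φ : MonoidAlgebra ℝ (DihedralGroup 0) ≃ₐ[ℝ] A,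
      φ (MonoidAlgebra.of ℝ (DihedralGroup 0) (DihedralGroup.sr 0)) =
        algebraMap ℝ A ((1 - qs) / (1 + qs)) + (2 / (1 + qs)) • T (DihedralGroup.sr 0) ∧
      φ (MonoidAlgebra.of ℝ (DihedralGroup 0) (DihedralGroup.sr 1)) =
        algebraMap ℝ A ((1 - qt) / (1 + qt)) + (2 / (1 + qt)) • T (DihedralGroup.sr 1) := by
  have hqs' : 1 + qs ≠ 0 := by positivity
  have hqt' : 1 + qt ≠ 0 := by positivity
  have hs : IsHeckeMulLeft T (sr 0) qs := hmuls
  have ht : IsHeckeMulLeft T (sr 1) qt := hmult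
  have hσs := heckeInvol_mul_self hqs' (hs.mul_self hone)
  have hσt := heckeInvol_mul_self hqt' (ht.mul_self hone)
  let φ := MonoidAlgebra.liftInvolutions (k := ℝ) _ _ hσs hσt
  have hT : ⇑T = altWord (T (sr 0)) (T (sr 1)) :=
    eq_altWord hone hs.reducedMulLeft ht.reducedMulLeft
  have hφ (w : W) :
      φ (altWord (heckeGen qs (of ℝ W (sr 0))) (heckeGen qt (of ℝ W (sr 1))) w) = T w := by
    rw [map_altWord, map_heckeGen, map_heckeGen, liftInvolutions_of_sr_zero,
      liftInvolutions_of_sr_one, heckeGen_heckeInvol hqs', heckeGen_heckeInvol hqt']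
    exact (congrFun hT w).symm
  exact ⟨AlgEquiv.ofBijective φ (φ.toLinearMap.bijective_of_map_eq_basis T
    (span_range_altWord_heckeGen_eq_top hqs' hqt') hφ), liftInvolutions_of_sr_zero hσs hσt,
    liftInvolutions_of_sr_one hσs hσt⟩
end

section
/- Let q_s, q_t > 0 and consider the system: χ² − (βγ + δ + δ⁻¹)χ + 1 = 0 together with (χ − δ⁻¹)/(β α_s) − (χ − δ)/(γ α_t) = μ − 1/(1+q_s) + 1/(1+q_t), where α_s = √q_s + 1/√q_s, α_t = √q_t + 1/√q_t, α_st = √(q_s q_t) − 1/√(q_s q_t), δ = α_s/α_t, β = α_st/α_s − α_t μ, γ = α_st/α_t + α_s μ, and β, γ ≠ 0. Then the only solutions (χ, μ) are (√(q_s q_t), 0), (1/√(q_s q_t), 0), (−√(q_s/q_t), 1), and (−√(q_t/q_s), −1). -/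
/-!
Write `s = √q_s`, `t = √q_t`, so that `α_s = s + s⁻¹`, `α_t = t + t⁻¹`, `α_st = st − (st)⁻¹`.
Since `βγ = α_st²/(α_sα_t) − α_sα_tμ²`, the first equation reads
`χ² − (D − Kμ²)χ + 1 = 0` with `D = st + (st)⁻¹` and `K = α_sα_t`. Clearing the denominators
`βα_s = α_st − Kμ` and `γα_t = α_st + Kμ`, the second equation becomes
`μ (2χ − D + Kμ² + Fμ) = 0` with `F = s/t − t/s`. For `μ = 0` the roots of the quadratic are
`st` and `(st)⁻¹`. Otherwise `χ` is given by the linear equation, and substituting it into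
the quadratic leaves `(μ² − 1)(K²μ² − α_st²) = 0`; the second factor is `−(βα_s)(γα_t) ≠ 0`,
so `μ = ±1`, and the linear equation gives `χ = −s/t` resp. `χ = −t/s`.
-/

open Real

/-- Eliminating `χ` leaves `F²μ² = (D − Kμ²)² − 4`, a quadratic in `μ²` whose roots are `1`
(by `hK`) and `C²/K²` (by `hC`). -/
theorem sq_sub_one_mul_eq_zero_of_quadratic_of_linear {R : Type*} [CommRing R]
    {χ μ C D F K : R} (hC : C ^ 2 = D ^ 2 - 4) (hK : (K - D) ^ 2 = F ^ 2 + 4)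
    (hquad : χ ^ 2 - (D - K * μ ^ 2) * χ + 1 = 0) (hlin : 2 * χ = D - K * μ ^ 2 - F * μ) :
    (μ ^ 2 - 1) * (K ^ 2 * μ ^ 2 - C ^ 2) = 0 := by
  linear_combination (1 - μ ^ 2) * hC - μ ^ 2 * hK
    + (2 * χ - (D - K * μ ^ 2 - F * μ) - 2 * F * μ) * hlin - 4 * hquad

theorem add_sq_eq_sub_sq_add_four_of_mul_eq_one {R : Type*} [CommRing R] {x y : R}
    (hxy : x * y = 1) : (x + y) ^ 2 = (x - y) ^ 2 + 4 := by
  linear_combination 4 * hxy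

theorem eq_or_eq_one_div_of_sq_sub_add_one_div_mul_add_one {K : Type*} [Field K] {x χ : K}
    (hx : x ≠ 0) (h : χ ^ 2 - (x + 1 / x) * χ + 1 = 0) : χ = x ∨ χ = 1 / x := by
  have hfactor : (χ - x) * (χ - 1 / x) = 0 := by
    linear_combination (norm := (field_simp; ring)) h
  rcases mul_eq_zero.1 hfactor with h | h
  · exact .inl (sub_eq_zero.1 h)
  · exact .inr (sub_eq_zero.1 h)

theorem add_one_div_ne_zero {s : ℝ} (hs : s ≠ 0) : s + 1 / s ≠ 0 := by
  field_simp
  positivity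

section

variable {s t μ χ αs αt αst δ β γ : ℝ}

theorem beta_mul_gamma_add_delta_add_inv (hs : s ≠ 0) (ht : t ≠ 0)
    (hαs : αs = s + 1 / s) (hαt : αt = t + 1 / t) (hαst : αst = s * t - 1 / (s * t))
    (hδ : δ = αs / αt) (hβ : β = αst / αs - αt * μ) (hγ : γ = αst / αt + αs * μ) :
    β * γ + δ + δ⁻¹ = s * t + 1 / (s * t) - αs * αt * μ ^ 2 := by
  have hs2 : s ^ 2 + 1 ≠ 0 := by positivity
  have ht2 : t ^ 2 + 1 ≠ 0 := by positivity
  subst hαs hαt hαst hδ hβ hγ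
  field_simp
  ring

theorem beta_mul_alpha (hαs : αs ≠ 0) (hβ : β = αst / αs - αt * μ) :
    β * αs = αst - αs * αt * μ := by
  rw [hβ]
  field_simp

theorem gamma_mul_alpha (hαt : αt ≠ 0) (hγ : γ = αst / αt + αs * μ) :
    γ * αt = αst + αs * αt * μ := by
  rw [hγ]
  field_simp

theorem mu_mul_linear_eq_zero_of_initial_eq (hs : s ≠ 0) (ht : t ≠ 0)
    (hαs : αs = s + 1 / s) (hαt : αt = t + 1 / t) (hαst : αst = s * t - 1 / (s * t))
    (hδ : δ = αs / αt) (hβ : β = αst / αs - αt * μ) (hγ : γ = αst / αt + αs * μ)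
    (hβ0 : β ≠ 0) (hγ0 : γ ≠ 0)
    (h : (χ - δ⁻¹) / (β * αs) - (χ - δ) / (γ * αt) = μ - 1 / (1 + s ^ 2) + 1 / (1 + t ^ 2)) :
    μ * (2 * χ - (s * t + 1 / (s * t) - αs * αt * μ ^ 2 - (s / t - t / s) * μ)) = 0 := by
  have hαs0 : αs ≠ 0 := hαs ▸ add_one_div_ne_zero hs
  have hαt0 : αt ≠ 0 := hαt ▸ add_one_div_ne_zero ht
  have hcleared : (χ - δ⁻¹) * (αst + αs * αt * μ) - (χ - δ) * (αst - αs * αt * μ)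
      = (μ - 1 / (1 + s ^ 2) + 1 / (1 + t ^ 2)) * ((αst - αs * αt * μ) * (αst + αs * αt * μ)) := by
    rw [← h, ← beta_mul_alpha hαs0 hβ, ← gamma_mul_alpha hαt0 hγ]
    field_simp
  refine (mul_eq_zero.1 ?_).resolve_left (mul_ne_zero hαs0 hαt0)
  have hs2 : 1 + s ^ 2 ≠ 0 := by positivity
  have ht2 : 1 + t ^ 2 ≠ 0 := by positivity
  subst hαs hαt hαst hδ
  linear_combination (norm := (field_simp; ring)) hcleared

theorem alpha_st_sq (hst : s * t ≠ 0) (hαst : αst = s * t - 1 / (s * t)) :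
    αst ^ 2 = (s * t + 1 / (s * t)) ^ 2 - 4 := by
  rw [hαst, add_sq_eq_sub_sq_add_four_of_mul_eq_one (mul_one_div_cancel hst)]
  ring

theorem alpha_mul_alpha_sub_sq (hs : s ≠ 0) (ht : t ≠ 0)
    (hαs : αs = s + 1 / s) (hαt : αt = t + 1 / t) :
    (αs * αt - (s * t + 1 / (s * t))) ^ 2 = (s / t - t / s) ^ 2 + 4 := by
  rw [← add_sq_eq_sub_sq_add_four_of_mul_eq_one (by field_simp), hαs, hαt]
  field_simp
  ring

theorem sq_mul_sq_sub_sq_ne_zero (hαs : αs ≠ 0) (hαt : αt ≠ 0)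
    (hβ : β = αst / αs - αt * μ) (hγ : γ = αst / αt + αs * μ) (hβ0 : β ≠ 0) (hγ0 : γ ≠ 0) :
    (αs * αt) ^ 2 * μ ^ 2 - αst ^ 2 ≠ 0 := by
  have hfactor : (αs * αt) ^ 2 * μ ^ 2 - αst ^ 2 = -((β * αs) * (γ * αt)) := by
    rw [beta_mul_alpha hαs hβ, gamma_mul_alpha hαt hγ]
    ring
  rw [hfactor]
  exact neg_ne_zero.2 (mul_ne_zero (mul_ne_zero hβ0 hαs) (mul_ne_zero hγ0 hαt))

end

/-- The only simultaneous real solutions (χ, μ) of the characteristic equation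
χ² − (βγ + δ + δ⁻¹)χ + 1 = 0 and the initial-condition equation
(χ − δ⁻¹)/(βα_s) − (χ − δ)/(γα_t) = μ − 1/(1+q_s) + 1/(1+q_t),
with β, γ ≠ 0, are (√(q_sq_t), 0), (1/√(q_sq_t), 0), (−√(q_s/q_t), 1)
and (−√(q_t/q_s), −1). -/
theorem solutions_of_system (qs qt : ℝ) (hqs : 0 < qs) (hqt : 0 < qt)
    (χ μ αs αt αst δ β γ : ℝ)
    (hαs : αs = Real.sqrt qs + 1 / Real.sqrt qs)
    (hαt : αt = Real.sqrt qt + 1 / Real.sqrt qt)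
    (hαst : αst = Real.sqrt (qs * qt) - 1 / Real.sqrt (qs * qt))
    (hδ : δ = αs / αt)
    (hβ : β = αst / αs - αt * μ)
    (hγ : γ = αst / αt + αs * μ)
    (hβ0 : β ≠ 0) (hγ0 : γ ≠ 0)
    (heq1 : χ ^ 2 - (β * γ + δ + δ⁻¹) * χ + 1 = 0)
    (heq2 : (χ - δ⁻¹) / (β * αs) - (χ - δ) / (γ * αt)
              = μ - 1 / (1 + qs) + 1 / (1 + qt)) :
    (χ = Real.sqrt (qs * qt) ∧ μ = 0) ∨
    (χ = 1 / Real.sqrt (qs * qt) ∧ μ = 0) ∨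
    (χ = -(Real.sqrt qs / Real.sqrt qt) ∧ μ = 1) ∨
    (χ = -(Real.sqrt qt / Real.sqrt qs) ∧ μ = -1) := by
  obtain ⟨s, hs, rfl⟩ : ∃ s, 0 < s ∧ s ^ 2 = qs := ⟨√qs, sqrt_pos.2 hqs, sq_sqrt hqs.le⟩
  obtain ⟨t, ht, rfl⟩ : ∃ t, 0 < t ∧ t ^ 2 = qt := ⟨√qt, sqrt_pos.2 hqt, sq_sqrt hqt.le⟩
  have hst : √(s ^ 2 * t ^ 2) = s * t := by rw [← mul_pow, sqrt_sq (by positivity)]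
  rw [sqrt_sq hs.le] at hαs ⊢
  rw [sqrt_sq ht.le] at hαt ⊢
  rw [hst] at hαst ⊢
  rw [beta_mul_gamma_add_delta_add_inv hs.ne' ht.ne' hαs hαt hαst hδ hβ hγ] at heq1
  rcases mul_eq_zero.1 (mu_mul_linear_eq_zero_of_initial_eq hs.ne' ht.ne' hαs hαt hαst hδ hβ hγ
    hβ0 hγ0 heq2) with rfl | hlin
  · rw [zero_pow two_ne_zero, mul_zero, sub_zero] at heq1
    rcases eq_or_eq_one_div_of_sq_sub_add_one_div_mul_add_one (by positivity) heq1 with h | h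
    · exact .inl ⟨h, rfl⟩
    · exact .inr (.inl ⟨h, rfl⟩)
  have hαs0 : αs ≠ 0 := hαs ▸ add_one_div_ne_zero hs.ne'
  have hαt0 : αt ≠ 0 := hαt ▸ add_one_div_ne_zero ht.ne'
  have hμ : μ ^ 2 = 1 := sub_eq_zero.1 <| (mul_eq_zero.1 <|
    sq_sub_one_mul_eq_zero_of_quadratic_of_linear (alpha_st_sq (by positivity) hαst)
      (alpha_mul_alpha_sub_sq hs.ne' ht.ne' hαs hαt) heq1 (sub_eq_zero.1 hlin)).resolve_right
    (sq_mul_sq_sub_sq_ne_zero hαs0 hαt0 hβ hγ hβ0 hγ0)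
  rw [hαs, hαt] at hlin
  rcases sq_eq_one_iff.1 hμ with rfl | rfl
  · refine .inr (.inr (.inl ⟨?_, rfl⟩))
    rw [← neg_div, eq_div_iff ht.ne']
    linear_combination (norm := (field_simp; ring)) (t / 2) * hlin
  · refine .inr (.inr (.inr ⟨?_, rfl⟩))
    rw [← neg_div, eq_div_iff hs.ne']
    linear_combination (norm := (field_simp; ring)) (s / 2) * hlin
end

section
/- Let q_s q_t < 1 and let κ₊ = Σ_{w∈W} τ_w in the Hecke-completed Hilbert space L²_q W (the sum converges since Σ_w q^w < ∞). Then τ_s · κ₊ = q_s κ₊ and τ_t · κ₊ = q_t κ₊, and hence s·κ₊ = κ₊ and t·κ₊ = κ₊, where s = (1−q_s)/(1+q_s) + (2/(1+q_s))τ_s. -/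
def dihProd (a b : ℝ) : DihedralGroup 0 → ℝ
  | .r n => (a * b) ^ (zmodToInt n).natAbs
  | .sr k => if zmodToInt k ≤ 0 then a ^ ((zmodToInt k).natAbs + 1) * b ^ (zmodToInt k).natAbs
             else a ^ ((zmodToInt k).natAbs - 1) * b ^ (zmodToInt k).natAbs

-- test basic facts
example (j : ZMod 0) (w : DihedralGroup 0) : DihedralGroup.sr j * (DihedralGroup.sr j * w) = w := by
  rw [← mul_assoc, DihedralGroup.sr_mul_self, one_mul]

lemma dihLen_sr_odd (k : ZMod 0) : Odd (dihLen (.sr k)) := by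
  unfold dihLen
  by_cases h : zmodToInt k ≤ 0
  · simp only [h, if_true]; exact ⟨_, rfl⟩
  · simp only [h, if_false]
    have : 1 ≤ (zmodToInt k).natAbs := by omega
    rw [Nat.odd_iff]; omega

lemma dihLen_ne (j : ZMod 0) (w : DihedralGroup 0) : dihLen (.sr j * w) ≠ dihLen w := by
  cases w with
  | r n =>
    rw [DihedralGroup.sr_mul_r]
    have h1 := dihLen_sr_odd (j + n)
    have : dihLen (.r n) = 2 * (zmodToInt n).natAbs := rfl
    rw [Nat.odd_iff] at h1
    omega
  | sr k =>
    rw [DihedralGroup.sr_mul_sr]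
    have h1 := dihLen_sr_odd k
    have : dihLen (.r (k - j)) = 2 * (zmodToInt (k - j)).natAbs := rfl
    rw [Nat.odd_iff] at h1
    omega

def dihEquiv : Bool × ℤ ≃ DihedralGroup 0 where
  toFun p := match p with
    | (false, n) => .r n
    | (true, n) => .sr n
  invFun w := match w with
    | .r n => (false, zmodToInt n)
    | .sr n => (true, zmodToInt n)
  left_inv := by rintro ⟨_ | _, n⟩ <;> rfl
  right_inv := by rintro (n | n) <;> rfl

lemma sqrt_pow' {x : ℝ} (hx : 0 ≤ x) (n : ℕ) : Real.sqrt (x ^ n) = Real.sqrt x ^ n := by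
  induction n with
  | zero => simp
  | succ m ih => rw [pow_succ, pow_succ, Real.sqrt_mul (pow_nonneg hx m), ih]

lemma summable_geo_int {c : ℝ} (h0 : 0 ≤ c) (h1 : c < 1) :
    Summable fun n : ℤ => c ^ n.natAbs := by
  apply Summable.of_nat_of_neg <;>
    simpa using summable_geometric_of_lt_one h0 h1

lemma summable_geo_int' {c : ℝ} (h0 : 0 ≤ c) (h1 : c < 1) :
    Summable fun n : ℤ => c ^ (n.natAbs - 1) := by
  have h : Summable fun n : ℕ => c ^ (n - 1) := by
    refine (summable_nat_add_iff 1).mp ?_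
    simpa using summable_geometric_of_lt_one h0 h1
  apply Summable.of_nat_of_neg <;> simpa using h

lemma Lfix {H : Type*} [NormedAddCommGroup H] [NormedSpace ℝ H] [CompleteSpace H]
    (q : ℝ) (τ : DihedralGroup 0 → H) (hτ : Summable τ) (L : H →L[ℝ] H) (j : ZMod 0)
    (hL : ∀ w : DihedralGroup 0,
      L (τ w) = if dihLen (DihedralGroup.sr j * w) > dihLen w
        then τ (DihedralGroup.sr j * w)
        else (q - 1) • τ w + q • τ (DihedralGroup.sr j * w)) :
    L (∑' w, τ w) = q • ∑' w, τ w := by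
  have hinv : ∀ w : DihedralGroup 0, DihedralGroup.sr j * (DihedralGroup.sr j * w) = w := by
    intro w; rw [← mul_assoc, DihedralGroup.sr_mul_self, one_mul]
  have key : ∀ w : DihedralGroup 0,
      L (τ w) + L (τ (DihedralGroup.sr j * w))
        = q • (τ w + τ (DihedralGroup.sr j * w)) := by
    intro w
    rcases lt_or_gt_of_ne (dihLen_ne j w) with h | h
    · rw [hL w, hL (DihedralGroup.sr j * w), hinv, if_neg (by omega), if_pos (by omega)]
      rw [smul_add, sub_smul, one_smul]
      abel
    · rw [hL w, hL (DihedralGroup.sr j * w), hinv, if_pos (by omega), if_neg (by omega)]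
      rw [smul_add, sub_smul, one_smul]
      abel
  let σ : DihedralGroup 0 ≃ DihedralGroup 0 := Equiv.mulLeft (DihedralGroup.sr j)
  have hσ : ∀ w, σ w = DihedralGroup.sr j * w := fun _ => rfl
  have hsL : Summable (fun w => L (τ w)) := hτ.map L L.continuous
  have hsLσ : Summable (fun w => L (τ (σ w))) := (σ.summable_iff (f := fun w => L (τ w))).2 hsL
  have hτσ : Summable (fun w => τ (σ w)) := (σ.summable_iff (f := τ)).2 hτ
  have big : (2:ℝ) • ∑' w, L (τ w) = (2:ℝ) • (q • ∑' w, τ w) := by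
    calc (2:ℝ) • ∑' w, L (τ w) = ∑' w, L (τ w) + ∑' w, L (τ (σ w)) := by
          rw [σ.tsum_eq (fun w => L (τ w)), two_smul]
      _ = ∑' w, (L (τ w) + L (τ (σ w))) := (Summable.tsum_add hsL hsLσ).symm
      _ = ∑' w, q • (τ w + τ (σ w)) := tsum_congr fun w => by rw [hσ]; exact key w
      _ = q • ∑' w, (τ w + τ (σ w)) := Summable.tsum_const_smul q (hτ.add hτσ)
      _ = q • (∑' w, τ w + ∑' w, τ (σ w)) := by rw [Summable.tsum_add hτ hτσ]
      _ = (2:ℝ) • (q • ∑' w, τ w) := by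
          rw [σ.tsum_eq τ, smul_comm, two_smul, smul_add]
  have h2 : L (∑' w, τ w) = ∑' w, L (τ w) := L.map_tsum hτ
  rw [h2]
  exact smul_right_injective H two_ne_zero big

/-- For q_s q_t < 1, the vector κ₊ = Σ_w τ_w converges in L²_q W and satisfies
τ_s κ₊ = q_s κ₊, τ_t κ₊ = q_t κ₊, hence s·κ₊ = κ₊ and t·κ₊ = κ₊ where
s = (1−q_s)/(1+q_s) + (2/(1+q_s))τ_s (and analogously for t). -/
theorem kappa_plus_fixed (qs qt : ℝ) (hqs : 0 < qs) (hqt : 0 < qt)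
    (hq : qs * qt < 1)
    {H : Type*} [NormedAddCommGroup H] [InnerProductSpace ℝ H] [CompleteSpace H]
    (τ : DihedralGroup 0 → H)
    (hinner : ∀ w w' : DihedralGroup 0,
      inner (𝕜 := ℝ) (τ w) (τ w') = if w = w' then dihProd qs qt w else 0)
    (Ls Lt : H →L[ℝ] H)
    (hLs : ∀ w : DihedralGroup 0,
      Ls (τ w) = if dihLen (DihedralGroup.sr 0 * w) > dihLen w
        then τ (DihedralGroup.sr 0 * w)
        else (qs - 1) • τ w + qs • τ (DihedralGroup.sr 0 * w))
    (hLt : ∀ w : DihedralGroup 0,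
      Lt (τ w) = if dihLen (DihedralGroup.sr 1 * w) > dihLen w
        then τ (DihedralGroup.sr 1 * w)
        else (qt - 1) • τ w + qt • τ (DihedralGroup.sr 1 * w)) :
    Summable τ ∧
    Ls (∑' w, τ w) = qs • ∑' w, τ w ∧
    Lt (∑' w, τ w) = qt • ∑' w, τ w ∧
    ((1 - qs) / (1 + qs)) • (∑' w, τ w) + (2 / (1 + qs)) • Ls (∑' w, τ w)
      = ∑' w, τ w ∧
    ((1 - qt) / (1 + qt)) • (∑' w, τ w) + (2 / (1 + qt)) • Lt (∑' w, τ w)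
      = ∑' w, τ w := by
  -- notation
  set c : ℝ := Real.sqrt (qs * qt) with hc
  have hc0 : 0 ≤ c := Real.sqrt_nonneg _
  have hc1 : c < 1 := by
    rw [hc, Real.sqrt_lt' one_pos]
    simpa using hq
  have hn : ∀ w, ‖τ w‖ = Real.sqrt (dihProd qs qt w) := by
    intro w
    have h := hinner w w
    rw [if_pos rfl] at h
    rw [← h, real_inner_self_eq_norm_mul_norm, Real.sqrt_mul_self (norm_nonneg _)]
  -- summability
  have hτ : Summable τ := by
    apply Summable.of_norm
    rw [← dihEquiv.summable_iff]
    set C : ℝ := max (Real.sqrt qs) (Real.sqrt qt) with hC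
    refine (summable_prod_of_nonneg (fun p => norm_nonneg _)).2 ⟨?_, ?_⟩
    · rintro (b | b)
      · -- false : r n
        have heq : ∀ n : ℤ, ‖τ (dihEquiv (false, n))‖ = c ^ n.natAbs := by
          intro n
          show ‖τ (.r n)‖ = _
          rw [hn]
          have : dihProd qs qt (.r n) = (qs * qt) ^ n.natAbs := rfl
          rw [this, sqrt_pow' (by positivity)]
        simpa only [heq] using summable_geo_int hc0 hc1
      · -- true : sr n
        refine Summable.of_nonneg_of_le (f := fun n : ℤ => C * c ^ (n.natAbs - 1))
          (fun n => norm_nonneg _) ?_ ((summable_geo_int' hc0 hc1).mul_left C)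
        intro n
        show ‖τ (.sr n)‖ ≤ C * c ^ (n.natAbs - 1)
        rw [hn]
        by_cases hn0 : (zmodToInt n) ≤ 0
        · have : dihProd qs qt (.sr n) =
              qs * (qs * qt) ^ (zmodToInt n).natAbs := by
            simp only [dihProd, if_pos hn0]
            rw [mul_pow, pow_succ]
            ring
          rw [this, Real.sqrt_mul hqs.le, sqrt_pow' (by positivity)]
          have h1 : Real.sqrt qs ≤ C := le_max_left _ _
          have h2 : c ^ (zmodToInt n).natAbs ≤ c ^ ((zmodToInt n).natAbs - 1) :=
            pow_le_pow_of_le_one hc0 hc1.le (Nat.sub_le _ _)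
          have hzn : (zmodToInt n).natAbs = n.natAbs := rfl
          rw [← hzn]
          exact mul_le_mul h1 h2 (by positivity) (by positivity)
        · have hm : 1 ≤ (zmodToInt n).natAbs := by omega
          obtain ⟨m, hm'⟩ : ∃ m, (zmodToInt n).natAbs = m + 1 := ⟨(zmodToInt n).natAbs - 1, by omega⟩
          have : dihProd qs qt (.sr n) = qt * (qs * qt) ^ m := by
            simp only [dihProd, if_neg hn0, hm']
            simp only [Nat.add_sub_cancel]
            rw [mul_pow, pow_succ]
            ring
          rw [this, Real.sqrt_mul hqt.le, sqrt_pow' (by positivity)]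
          have hzn : (zmodToInt n).natAbs = n.natAbs := rfl
          rw [← hzn, hm', Nat.add_sub_cancel]
          exact mul_le_mul (le_max_right _ _) le_rfl (by positivity) (by positivity)
    · exact Summable.of_finite
  have hs : Ls (∑' w, τ w) = qs • ∑' w, τ w := Lfix qs τ hτ Ls 0 hLs
  have ht : Lt (∑' w, τ w) = qt • ∑' w, τ w := Lfix qt τ hτ Lt 1 hLt
  refine ⟨hτ, hs, ht, ?_, ?_⟩
  · rw [hs, smul_smul, ← add_smul]
    have h1 : (1 - qs) / (1 + qs) + 2 / (1 + qs) * qs = 1 := by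
      field_simp
      ring
    rw [h1, one_smul]
  · rw [ht, smul_smul, ← add_smul]
    have h1 : (1 - qt) / (1 + qt) + 2 / (1 + qt) * qt = 1 := by
      field_simp
      ring
    rw [h1, one_smul]
end
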